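/- arXiv:2303.10417 — 2 statements merged into one kernel-verified Lean document; each statement's English description precedes it below -/
import Mathlib

section
/- Fix an integer n ≥ 1 and a Lebesgue measurable set P ⊆ [0,1] of positive Lebesgue measure. Define K* by K*_k(X) = ( ∫_P p^{q_k(X)} (1−p)^{k−q_k(X)} (2p−1) dp ) / ( ∫_P p^{q_k(X)} (1−p)^{k−q_k(X)} dp ) for each X ∈ 𝒳 and 0 ≤ k ≤ n−1. Then K* is an admissible controller (its gains lie in (−1,1) and are causal), and K* is the unique maximizer of f over all admissible controllers: for every admissible controller K with K ≠ K*, f(K) < f(K*). -/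
/-!
Given the first `k` outcomes, the stage-`k` term of `f` depends on the gain `κ` only through
`A log (1 + κ) + B log (1 - κ)`, where `A` and `B` are the integrals over `P` of the likelihood of
the observed prefix times `p`, resp. `1 - p`. Summing out the later flips turns `f` into a positive
combination of such terms, one for each stage and prefix, and each of them is strictly concave in
`κ` with unique maximiser `(A - B) / (A + B)`, which is `K*`.
-/

open MeasureTheory

/- Sample paths are `X : Fin n → Bool`, with `X i = true` meaning the `i`-th flip is heads
(`X_i = 1`) and `X i = false` meaning tails (`X_i = -1`). -/

/-- The number of heads along a sample path. -/
def numHeads {n : ℕ} (X : Fin n → Bool) : ℕ :=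
  (Finset.univ.filter fun i => X i = true).card

/-- `qk k X` is the number of heads among the flips strictly before stage `k`. -/
def qk {n : ℕ} (k : Fin n) (X : Fin n → Bool) : ℕ :=
  (Finset.univ.filter fun i => i < k ∧ X i = true).card

/-- A controller is admissible if all its gains lie in `(-1,1)` and it is causal, i.e. the
stage-`k` gain depends only on the outcomes of flips `0, …, k-1`. -/
def Admissible {n : ℕ} (K : Fin n → (Fin n → Bool) → ℝ) : Prop :=
  (∀ k X, K k X ∈ Set.Ioo (-1 : ℝ) 1) ∧
    ∀ k X Y, (∀ i, i < k → X i = Y i) → K k X = K k Y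

/-- The expected logarithmic growth of controller `K` at heads-probability `p`. -/
noncomputable def ELG {n : ℕ} (K : Fin n → (Fin n → Bool) → ℝ) (p : ℝ) : ℝ :=
  (1 / (n : ℝ)) * ∑ X : Fin n → Bool,
    p ^ numHeads X * (1 - p) ^ (n - numHeads X) *
      ∑ k : Fin n, Real.log (1 + K k X * (if X k then 1 else -1))

/-- The robust objective: expected logarithmic growth integrated over the uncertainty
set `P` for the probability of heads. -/
noncomputable def robustObj {n : ℕ} (P : Set ℝ) (K : Fin n → (Fin n → Bool) → ℝ) : ℝ :=
  ∫ p in P, ELG K p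

/-- The robust optimal nonlinear controller from the main theorem. -/
noncomputable def Kstar {n : ℕ} (P : Set ℝ) (k : Fin n) (X : Fin n → Bool) : ℝ :=
  (∫ p in P, p ^ qk k X * (1 - p) ^ (k.val - qk k X) * (2 * p - 1)) /
    ∫ p in P, p ^ qk k X * (1 - p) ^ (k.val - qk k X)

open Finset Real

noncomputable def logPayoff (A B κ : ℝ) : ℝ := A * log (1 + κ) + B * log (1 - κ)

theorem sub_div_add_mem_Ioo {A B : ℝ} (hA : 0 < A) (hB : 0 < B) :
    (A - B) / (A + B) ∈ Set.Ioo (-1) 1 := by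
  have hAB : 0 < A + B := by positivity
  constructor
  · rw [lt_div_iff₀ hAB]
    linarith
  · rw [div_lt_one hAB]
    linarith

theorem logPayoff_lt_of_ne {A B κ : ℝ} (hA : 0 < A) (hB : 0 < B) (hκ : κ ∈ Set.Ioo (-1) 1)
    (hne : κ ≠ (A - B) / (A + B)) : logPayoff A B κ < logPayoff A B ((A - B) / (A + B)) := by
  obtain ⟨hκ₁, hκ₂⟩ := hκ
  have hAB : 0 < A + B := by positivity
  have hplus : 1 + (A - B) / (A + B) = 2 * A / (A + B) := by
    field_simp
    ring
  have hminus : 1 - (A - B) / (A + B) = 2 * B / (A + B) := by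
    field_simp
    ring
  have hlog₁ : log ((1 + κ) / (2 * A / (A + B))) < (1 + κ) / (2 * A / (A + B)) - 1 :=
    log_lt_sub_one_of_pos (div_pos (by linarith) (by positivity))
      (div_ne_one_of_ne fun h => hne (by linarith))
  have hlog₂ : log ((1 - κ) / (2 * B / (A + B))) ≤ (1 - κ) / (2 * B / (A + B)) - 1 :=
    log_le_sub_one_of_pos (div_pos (by linarith) (by positivity))
  rw [log_div (by linarith) (by positivity)] at hlog₁ hlog₂
  have hzero :
      A * ((1 + κ) / (2 * A / (A + B)) - 1) + B * ((1 - κ) / (2 * B / (A + B)) - 1) = 0 := by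
    field_simp
    ring
  rw [logPayoff, logPayoff, hplus, hminus]
  nlinarith [mul_lt_mul_of_pos_left hlog₁ hA, mul_le_mul_of_nonneg_left hlog₂ hB.le]

theorem logPayoff_le {A B κ : ℝ} (hA : 0 < A) (hB : 0 < B) (hκ : κ ∈ Set.Ioo (-1) 1) :
    logPayoff A B κ ≤ logPayoff A B ((A - B) / (A + B)) := by
  rcases eq_or_ne κ ((A - B) / (A + B)) with h | h
  · rw [h]
  · exact (logPayoff_lt_of_ne hA hB hκ h).le

section BernoulliWeight

variable {ι : Type*}

def bernoulliWeight (T : Finset ι) (p : ℝ) (X : ι → Bool) : ℝ :=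
  ∏ i ∈ T, if X i then p else 1 - p

theorem bernoulliWeight_eq (T : Finset ι) (p : ℝ) (X : ι → Bool) :
    bernoulliWeight T p X =
      p ^ #{i ∈ T | X i = true} * (1 - p) ^ (#T - #{i ∈ T | X i = true}) := by
  rw [bernoulliWeight, prod_ite, prod_const, prod_const,
    ← card_filter_add_card_filter_not (s := T) (fun i => X i = true), Nat.add_sub_cancel_left]

variable [DecidableEq ι]

theorem bernoulliWeight_update_of_notMem {T : Finset ι} {j : ι} (hj : j ∉ T) (p : ℝ)
    (X : ι → Bool) (b : Bool) :
    bernoulliWeight T p (Function.update X j b) = bernoulliWeight T p X :=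
  prod_congr rfl fun i hi => by rw [Function.update_of_ne (ne_of_mem_of_not_mem hi hj)]

theorem bernoulliWeight_update_of_mem {T : Finset ι} {j : ι} (hj : j ∈ T) (p : ℝ)
    (X : ι → Bool) (b : Bool) :
    bernoulliWeight T p (Function.update X j b) =
      (if b then p else 1 - p) * bernoulliWeight (T.erase j) p X := by
  rw [bernoulliWeight, ← mul_prod_erase T _ hj, Function.update_self]
  exact congrArg _ (bernoulliWeight_update_of_notMem (notMem_erase j T) p X b)

variable [Fintype ι]

theorem sum_eq_inv_two_mul_sum_update (j : ι) (F : (ι → Bool) → ℝ) :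
    ∑ X, F X = 2⁻¹ * ∑ X, (F (Function.update X j true) + F (Function.update X j false)) := by
  have hflip : ∑ X, F (Function.update X j (!X j)) = ∑ X, F X := by
    refine Fintype.sum_bijective _ (Function.Involutive.bijective fun X => ?_) _ _ fun _ => rfl
    simp
  have hpair : ∀ X, F (Function.update X j true) + F (Function.update X j false)
      = F X + F (Function.update X j (!X j)) := by
    intro X
    have hX := Function.update_eq_self j X
    cases h : X j <;> rw [h] at hX <;> simp [hX, add_comm]
  simp_rw [hpair, sum_add_distrib, hflip]
  ring

theorem sum_bernoulliWeight_mul {T : Finset ι} {j : ι} (hj : j ∈ T) (p : ℝ)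
    (G : (ι → Bool) → ℝ) :
    ∑ X, bernoulliWeight T p X * G X = 2⁻¹ * ∑ X, bernoulliWeight (T.erase j) p X *
      (p * G (Function.update X j true) + (1 - p) * G (Function.update X j false)) := by
  rw [sum_eq_inv_two_mul_sum_update j]
  congr 1
  refine sum_congr rfl fun X _ => ?_
  simp only [bernoulliWeight_update_of_mem hj, if_true, Bool.false_eq_true, if_false]
  ring

theorem sum_bernoulliWeight_mul_of_update_eq {T : Finset ι} {j : ι} (hj : j ∈ T) (p : ℝ)
    {G : (ι → Bool) → ℝ} (hG : ∀ X b, G (Function.update X j b) = G X) :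
    ∑ X, bernoulliWeight T p X * G X = 2⁻¹ * ∑ X, bernoulliWeight (T.erase j) p X * G X := by
  simp only [sum_bernoulliWeight_mul hj, hG]
  ring_nf

-- The factor `2⁻¹ ^ #S` only reflects that `∑ X` also runs over the coordinates in `S`,
-- which the weight on the right no longer sees.
theorem sum_bernoulliWeight_union_mul {S T : Finset ι} (hST : Disjoint S T) (p : ℝ)
    {G : (ι → Bool) → ℝ} (hG : ∀ j ∈ S, ∀ X b, G (Function.update X j b) = G X) :
    ∑ X, bernoulliWeight (S ∪ T) p X * G X = 2⁻¹ ^ #S * ∑ X, bernoulliWeight T p X * G X := by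
  induction S using Finset.induction_on with
  | empty => simp
  | @insert j S hjS ih =>
    have hjST : j ∉ S ∪ T := by
      simpa [hjS] using disjoint_left.1 hST (mem_insert_self j S)
    rw [insert_union, sum_bernoulliWeight_mul_of_update_eq (mem_insert_self j _) p
      (hG j (mem_insert_self j S)), erase_insert hjST,
      ih (disjoint_of_subset_left (subset_insert j S) hST)
        fun i hi => hG i (mem_insert_of_mem hi),
      card_insert_of_notMem hjS, pow_succ]
    ring

end BernoulliWeight

theorem integral_pos_of_ae_pos {α : Type*} [MeasurableSpace α] {μ : Measure α} (hμ : μ ≠ 0)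
    {f : α → ℝ} (hf : Integrable f μ) (hpos : ∀ᵐ x ∂μ, 0 < f x) : 0 < ∫ x, f x ∂μ := by
  refine (integral_pos_iff_support_of_nonneg_ae (hpos.mono fun _ h => h.le) hf).2
    (pos_iff_ne_zero.2 fun h0 => hμ ?_)
  have hzero : ∀ᵐ x ∂μ, f x = 0 :=
    (measure_eq_zero_iff_ae_notMem.1 h0).mono fun _ => Function.notMem_support.1
  exact ae_eq_bot.1 <| Filter.eventually_false_iff_eq_bot.1 <|
    (hpos.and hzero).mono fun _ h => h.1.ne' h.2

theorem setIntegral_pos_of_pos_on_Ioo {P : Set ℝ} (hPsub : P ⊆ Set.Icc 0 1)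
    (hPpos : 0 < volume P) {f : ℝ → ℝ} (hf : Continuous f) (hpos : ∀ x ∈ Set.Ioo 0 1, 0 < f x) :
    0 < ∫ x in P, f x := by
  refine integral_pos_of_ae_pos (Measure.restrict_eq_zero.not.2 hPpos.ne')
    (hf.integrableOn_Icc.mono_set hPsub) ?_
  have hIcc : ∀ᵐ x ∂volume.restrict P, x ∈ Set.Icc (0 : ℝ) 1 :=
    ae_restrict_of_ae_restrict_of_subset hPsub (ae_restrict_mem measurableSet_Icc)
  filter_upwards [hIcc, ae_restrict_of_ae (Measure.ae_ne volume 0),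
    ae_restrict_of_ae (Measure.ae_ne volume 1)] with x hx hx0 hx1
  exact hpos x ⟨lt_of_le_of_ne hx.1 hx0.symm, lt_of_le_of_ne hx.2 hx1⟩

section Controller

variable {n : ℕ}

theorem qk_congr {k : Fin n} {X Y : Fin n → Bool} (h : ∀ i, i < k → X i = Y i) :
    qk k X = qk k Y := by
  unfold qk
  congr 1
  ext i
  simp only [mem_filter, mem_univ, true_and]
  exact and_congr_right fun hi => by rw [h i hi]

theorem bernoulliWeight_univ (p : ℝ) (X : Fin n → Bool) :
    bernoulliWeight univ p X = p ^ numHeads X * (1 - p) ^ (n - numHeads X) := by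
  rw [bernoulliWeight_eq, card_univ, Fintype.card_fin]
  rfl

theorem bernoulliWeight_Iio (k : Fin n) (p : ℝ) (X : Fin n → Bool) :
    bernoulliWeight (Iio k) p X = p ^ qk k X * (1 - p) ^ (k.val - qk k X) := by
  have hq : #{i ∈ Iio k | X i = true} = qk k X := by
    unfold qk
    congr 1
    ext i
    simp
  rw [bernoulliWeight_eq, hq, Fin.card_Iio]

theorem sum_bernoulliWeight_univ_mul_log_bet (k : Fin n) (p : ℝ) {κ : (Fin n → Bool) → ℝ}
    (hκ : ∀ X Y, (∀ i, i < k → X i = Y i) → κ X = κ Y) :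
    ∑ X, bernoulliWeight univ p X * log (1 + κ X * (if X k then 1 else -1)) =
      2⁻¹ ^ (n - k.val) * ∑ X, bernoulliWeight (Iio k) p X *
        (p * log (1 + κ X) + (1 - p) * log (1 - κ X)) := by
  have hκ_update : ∀ j, k ≤ j → ∀ X b, κ (Function.update X j b) = κ X := fun j hj X b =>
    hκ _ _ fun i hi => Function.update_of_ne (hi.trans_le hj).ne b X
  have huniv : (univ : Finset (Fin n)) = Ioi k ∪ Iic k := by
    ext i
    simp [lt_or_ge]
  have hdisj : Disjoint (Ioi k) (Iic k) :=
    disjoint_left.2 fun i h₁ h₂ => (mem_Ioi.1 h₁).not_ge (mem_Iic.1 h₂)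
  rw [huniv, sum_bernoulliWeight_union_mul hdisj p fun j hj X b => by
      rw [hκ_update j (mem_Ioi.1 hj).le, Function.update_of_ne (mem_Ioi.1 hj).ne],
    sum_bernoulliWeight_mul (mem_Iic.2 le_rfl), Iic_erase, Fin.card_Ioi, ← mul_assoc, ← pow_succ,
    show n - 1 - k.val + 1 = n - k.val by omega]
  simp [hκ_update k le_rfl, sub_eq_add_neg]

theorem ELG_eq_sum {K : Fin n → (Fin n → Bool) → ℝ}
    (hK : ∀ k X Y, (∀ i, i < k → X i = Y i) → K k X = K k Y) (p : ℝ) :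
    ELG K p = 1 / n * ∑ k, 2⁻¹ ^ (n - k.val) * ∑ X, p ^ qk k X * (1 - p) ^ (k.val - qk k X) *
      (p * log (1 + K k X) + (1 - p) * log (1 - K k X)) := by
  rw [ELG]
  congr 1
  simp_rw [← bernoulliWeight_univ, mul_sum]
  rw [sum_comm]
  refine sum_congr rfl fun k _ => ?_
  rw [sum_bernoulliWeight_univ_mul_log_bet k p (hK k), mul_sum]
  simp_rw [bernoulliWeight_Iio]

noncomputable def headsMass (P : Set ℝ) (k : Fin n) (X : Fin n → Bool) : ℝ :=
  ∫ p in P, p ^ qk k X * (1 - p) ^ (k.val - qk k X) * p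

noncomputable def tailsMass (P : Set ℝ) (k : Fin n) (X : Fin n → Bool) : ℝ :=
  ∫ p in P, p ^ qk k X * (1 - p) ^ (k.val - qk k X) * (1 - p)

variable {P : Set ℝ}

theorem robustObj_eq_sum_logPayoff (hPsub : P ⊆ Set.Icc 0 1) {K : Fin n → (Fin n → Bool) → ℝ}
    (hK : ∀ k X Y, (∀ i, i < k → X i = Y i) → K k X = K k Y) :
    robustObj P K = 1 / n * ∑ k, 2⁻¹ ^ (n - k.val) *
      ∑ X, logPayoff (headsMass P k X) (tailsMass P k X) (K k X) := by
  have hint : ∀ {f : ℝ → ℝ}, Continuous f → IntegrableOn f P :=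
    fun hf => hf.integrableOn_Icc.mono_set hPsub
  rw [robustObj]
  simp_rw [ELG_eq_sum hK]
  rw [integral_const_mul, integral_finsetSum _ fun k _ => hint (by fun_prop)]
  refine congrArg _ (sum_congr rfl fun k _ => ?_)
  rw [integral_const_mul, integral_finsetSum _ fun X _ => hint (by fun_prop)]
  refine congrArg _ (sum_congr rfl fun X _ => ?_)
  rw [logPayoff, headsMass, tailsMass, ← integral_mul_const, ← integral_mul_const,
    ← integral_add (hint (by fun_prop)) (hint (by fun_prop))]
  congr 1 with p
  ring

theorem Kstar_eq_div (hPsub : P ⊆ Set.Icc 0 1) (k : Fin n) (X : Fin n → Bool) :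
    Kstar P k X = (headsMass P k X - tailsMass P k X) / (headsMass P k X + tailsMass P k X) := by
  have hint : ∀ {f : ℝ → ℝ}, Continuous f → IntegrableOn f P :=
    fun hf => hf.integrableOn_Icc.mono_set hPsub
  rw [Kstar, headsMass, tailsMass, ← integral_sub (hint (by fun_prop)) (hint (by fun_prop)),
    ← integral_add (hint (by fun_prop)) (hint (by fun_prop))]
  congr 1 <;> congr 1 with p <;> ring

theorem headsMass_pos (hPsub : P ⊆ Set.Icc 0 1) (hPpos : 0 < volume P) (k : Fin n)
    (X : Fin n → Bool) : 0 < headsMass P k X :=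
  setIntegral_pos_of_pos_on_Ioo hPsub hPpos (by fun_prop) fun p hp => by
    have := sub_pos.2 hp.2
    have := hp.1
    positivity

theorem tailsMass_pos (hPsub : P ⊆ Set.Icc 0 1) (hPpos : 0 < volume P) (k : Fin n)
    (X : Fin n → Bool) : 0 < tailsMass P k X :=
  setIntegral_pos_of_pos_on_Ioo hPsub hPpos (by fun_prop) fun p hp => by
    have := sub_pos.2 hp.2
    have := hp.1
    positivity

theorem Kstar_admissible (hPsub : P ⊆ Set.Icc 0 1) (hPpos : 0 < volume P) :
    Admissible (Kstar (n := n) P) := by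
  refine ⟨fun k X => ?_, fun k X Y h => by rw [Kstar, Kstar, qk_congr h]⟩
  rw [Kstar_eq_div hPsub]
  exact sub_div_add_mem_Ioo (headsMass_pos hPsub hPpos k X) (tailsMass_pos hPsub hPpos k X)

end Controller

theorem robust_optimal_nonlinear_controller_general (n : ℕ) (P : Set ℝ)
    (hPsub : P ⊆ Set.Icc (0 : ℝ) 1) (hPpos : 0 < volume P) :
    Admissible (Kstar (n := n) P) ∧
      ∀ K : Fin n → (Fin n → Bool) → ℝ, Admissible K → K ≠ Kstar (n := n) P →
        robustObj P K < robustObj P (Kstar (n := n) P) := by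
  have hadm : Admissible (Kstar (n := n) P) := Kstar_admissible hPsub hPpos
  refine ⟨hadm, fun K hK hne => ?_⟩
  obtain ⟨k₀, X₀, h₀⟩ : ∃ k X, K k X ≠ Kstar P k X := by
    by_contra! h
    exact hne (funext₂ h)
  have hA := headsMass_pos hPsub hPpos (n := n)
  have hB := tailsMass_pos hPsub hPpos (n := n)
  have hle : ∀ k X, logPayoff (headsMass P k X) (tailsMass P k X) (K k X) ≤
      logPayoff (headsMass P k X) (tailsMass P k X) (Kstar P k X) := fun k X => by
    rw [Kstar_eq_div hPsub]
    exact logPayoff_le (hA k X) (hB k X) (hK.1 k X)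
  have hlt : logPayoff (headsMass P k₀ X₀) (tailsMass P k₀ X₀) (K k₀ X₀) <
      logPayoff (headsMass P k₀ X₀) (tailsMass P k₀ X₀) (Kstar P k₀ X₀) := by
    rw [Kstar_eq_div hPsub] at h₀ ⊢
    exact logPayoff_lt_of_ne (hA k₀ X₀) (hB k₀ X₀) (hK.1 k₀ X₀) h₀
  rw [robustObj_eq_sum_logPayoff hPsub hK.2, robustObj_eq_sum_logPayoff hPsub hadm.2]
  refine mul_lt_mul_of_pos_left (sum_lt_sum (fun k _ => ?_) ⟨k₀, mem_univ _, ?_⟩)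
    (one_div_pos.2 (Nat.cast_pos.2 k₀.pos))
  · gcongr with X
    exact hle k X
  · exact mul_lt_mul_of_pos_left (sum_lt_sum (fun X _ => hle k₀ X) ⟨X₀, mem_univ _, hlt⟩)
      (by positivity)

/-- Main theorem: `K*` is admissible and is the unique maximizer of the robust objective
`f(K) = ∫_P ELG_K(p) dp` over all admissible controllers. -/
theorem robust_optimal_nonlinear_controller (n : ℕ) (hn : 1 ≤ n) (P : Set ℝ)
    (hPmeas : MeasurableSet P) (hPsub : P ⊆ Set.Icc (0 : ℝ) 1) (hPpos : 0 < volume P) :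
    Admissible (Kstar (n := n) P) ∧
      ∀ K : Fin n → (Fin n → Bool) → ℝ, Admissible K → K ≠ Kstar (n := n) P →
        robustObj P K < robustObj P (Kstar (n := n) P) :=
  robust_optimal_nonlinear_controller_general n P hPsub hPpos
end

section
/- Fix an integer n ≥ 2 and a Lebesgue measurable set P ⊆ [0,1] of positive Lebesgue measure. Let K* be the robust optimal controller defined by K*_k(X) = ( ∫_P p^{q_k(X)} (1−p)^{k−q_k(X)} (2p−1) dp ) / ( ∫_P p^{q_k(X)} (1−p)^{k−q_k(X)} dp ). Then for every constant c ∈ (−1,1), letting K_c denote the static linear controller with K_k(X) = c for all X and k, one has f(K*) > f(K_c). In particular, the optimal robust nonlinear controller strictly outperforms the optimal static linear controller in robust expected logarithmic growth. -/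
open MeasureTheory

/-!
For a causal controller, summing out the flips after stage `k` and then the flip at stage `k`
turns the robust objective into `1/n` times a sum, over stages `k` and histories `y` of the first
`k` flips with `q` heads, of `A log (1 + K) + B log (1 - K)`, where
`A = ∫_P p^(q+1) (1-p)^(k-q)` and `B = ∫_P p^q (1-p)^(k-q+1)`.
Since `log t ≤ t - 1` with equality only at `t = 1`, this two-point objective has the unique
maximiser `(A - B) / (A + B)` on `(-1, 1)`, which is `K*`; so `K*` beats a constant gain `c`
history by history. At stage `1` the values of `K*` after heads and after tails differ, because
`(∫_P p (1-p))² < ∫_P p² · ∫_P (1-p)²` (the integrand `(a p - b (1-p))²` vanishes at one point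
only, and `P` has positive measure); hence `c` misses at least one of them and the inequality is
strict.
-/

open Finset Real

theorem prod_ite_eq_pow_mul_pow {ι M : Type*} [CommMonoid M] (S : Finset ι) (X : ι → Bool)
    (a b : M) :
    ∏ i ∈ S, (if X i then a else b) =
      a ^ #{i ∈ S | X i = true} * b ^ (#S - #{i ∈ S | X i = true}) := by
  rw [prod_ite, prod_const, prod_const, ← card_filter_add_card_filter_not (s := S)
    (fun i => X i = true), Nat.add_sub_cancel_left]

section ProductWeights

variable {ι α : Type*} [Fintype ι] [DecidableEq ι] [Fintype α] {w : α → ℝ}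

theorem sum_prod_mul_eq_sum_restrict_of_dependsOn (hw : ∑ a, w a = 1) (s : Set ι)
    [DecidablePred (· ∈ s)] {g : (ι → α) → ℝ} (hg : DependsOn g s) (z : ι → α) :
    ∑ x, (∏ i, w (x i)) * g x =
      ∑ y : s → α, (∏ i, w (y i)) * g (fun i => if h : i ∈ s then y ⟨i, h⟩ else z i) := by
  rw [← (Equiv.piEquivPiSubtypeProd (· ∈ s) fun _ => α).symm.sum_comp, Fintype.sum_prod_type]
  refine sum_congr rfl fun y _ => ?_
  calc _ = ∑ y' : {i // i ∉ s} → α, (∏ i, w (y i)) * (∏ i, w (y' i)) *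
        g (fun i => if h : i ∈ s then y ⟨i, h⟩ else z i) := by
        refine sum_congr rfl fun y' _ => ?_
        rw [← Fintype.prod_subtype_mul_prod_subtype (· ∈ s)]
        congr 1
        · congr 1 <;> refine prod_congr rfl fun i _ => ?_ <;> simp [i.2]
        · exact hg fun i hi => by simp [hi]
    _ = _ := by rw [← sum_mul, ← mul_sum, ← Fintype.prod_sum, hw, prod_const_one, mul_one]

theorem sum_prod_mul_eval_eq_sum_prod_mul_sum (hw : ∑ a, w a = 1) (k : ι)
    {F : (ι → α) → α → ℝ} (hF : ∀ x b a, F (Function.update x k b) a = F x a) :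
    ∑ x, (∏ i, w (x i)) * F x (x k) = ∑ x, (∏ i, w (x i)) * ∑ a, w a * F x a := by
  set e := (Equiv.funSplitAt k α).symm
  have hFe : ∀ a b r, F (e (a, r)) = F (e (b, r)) := fun a b r => funext fun c => by
    rw [← hF (e (b, r)) a]
    congr 1
    ext i
    by_cases hi : i = k <;> simp [e, hi]
  have hwe : ∀ a r, ∏ i, w (e (a, r) i) = w a * ∏ i, w (r i) := fun a r => by
    rw [Fintype.prod_eq_mul_prod_subtype_ne _ k]
    congr 1
    · simp [e]
    · exact prod_congr rfl fun i _ => by simp [e, i.2]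
  simp only [← e.sum_comp, Fintype.sum_prod_type, hwe]
  calc _ = ∑ r, (∏ i, w (r i)) * ∑ a, w a * F (e (a, r)) a := by
        rw [sum_comm]
        refine sum_congr rfl fun r _ => ?_
        rw [mul_sum]
        refine sum_congr rfl fun a _ => ?_
        simp only [e, Equiv.funSplitAt_symm_apply, ↓reduceDIte]
        ring
    _ = _ := by
        rw [← one_mul (∑ r, _), ← hw, sum_mul]
        refine sum_congr rfl fun a _ => ?_
        rw [mul_sum]
        refine sum_congr rfl fun r _ => ?_
        rw [mul_assoc]
        exact congrArg _ (congrArg _ (sum_congr rfl fun b _ => by rw [hFe b a r]))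

end ProductWeights

theorem mul_log_add_mul_log_lt {A B x : ℝ} (hA : 0 < A) (hB : 0 < B) (hx : x ∈ Set.Ioo (-1) 1)
    (hne : x ≠ (A - B) / (A + B)) :
    A * log (1 + x) + B * log (1 - x) <
      A * log (1 + (A - B) / (A + B)) + B * log (1 - (A - B) / (A + B)) := by
  set x₀ := (A - B) / (A + B)
  have h₁ : 1 + x₀ = 2 * A / (A + B) := by simp only [x₀]; field_simp; ring
  have h₂ : 1 - x₀ = 2 * B / (A + B) := by simp only [x₀]; field_simp; ring
  have hpos₁ : 0 < 1 + x₀ := h₁ ▸ by positivity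
  have hpos₂ : 0 < 1 - x₀ := h₂ ▸ by positivity
  have hlt : log (1 + x) - log (1 + x₀) < (1 + x) / (1 + x₀) - 1 := by
    rw [← log_div (by linarith [hx.1]) hpos₁.ne']
    refine log_lt_sub_one_of_pos (div_pos (by linarith [hx.1]) hpos₁) fun h => hne ?_
    linarith [(div_eq_one_iff_eq hpos₁.ne').mp h]
  have hle : log (1 - x) - log (1 - x₀) ≤ (1 - x) / (1 - x₀) - 1 := by
    rw [← log_div (by linarith [hx.2]) hpos₂.ne']
    exact log_le_sub_one_of_pos (div_pos (by linarith [hx.2]) hpos₂)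
  have hbalance : A * ((1 + x) / (1 + x₀) - 1) + B * ((1 - x) / (1 - x₀) - 1) = 0 := by
    rw [h₁, h₂]; field_simp; ring
  nlinarith [mul_lt_mul_of_pos_left hlt hA, mul_le_mul_of_nonneg_left hle hB.le]

theorem setIntegral_pos_of_ne_zero_off_countable {α : Type*} [MeasurableSpace α] {μ : Measure α}
    [NullSingletonClass μ] {P : Set α} (hPm : MeasurableSet P) (hPpos : 0 < μ P) {f : α → ℝ}
    (hf : IntegrableOn f P μ) (hf₀ : ∀ x ∈ P, 0 ≤ f x) {Z : Set α} (hZ : Z.Countable)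
    (hfZ : ∀ x ∈ P, x ∉ Z → f x ≠ 0) : 0 < ∫ x in P, f x ∂μ := by
  rw [setIntegral_pos_iff_support_of_nonneg_ae (ae_restrict_of_forall_mem hPm hf₀) hf]
  calc 0 < μ P := hPpos
    _ = μ (P \ Z) := (measure_sdiff_null (hZ.measure_zero μ)).symm
    _ ≤ μ (Function.support f ∩ P) := measure_mono fun x hx => ⟨hfZ x hx.1 hx.2, hx.1⟩

theorem Continuous.integrableOn_of_subset_Icc {f : ℝ → ℝ} (hf : Continuous f) {P : Set ℝ}
    {a b : ℝ} (hP : P ⊆ Set.Icc a b) : IntegrableOn f P :=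
  hf.integrableOn_Icc.mono_set hP

section Histories

variable {n : ℕ}

def pathOfHistory (k : Fin n) (y : Set.Iio k → Bool) : Fin n → Bool :=
  fun i => if h : i ∈ Set.Iio k then y ⟨i, h⟩ else false

theorem qk_eq_card_filter_Iio (k : Fin n) (X : Fin n → Bool) :
    qk k X = #{i ∈ Finset.Iio k | X i = true} := by
  unfold qk
  congr 1
  ext i
  simp

theorem qk_dependsOn (k : Fin n) : DependsOn (qk k) (Set.Iio k) := fun X Y h => by
  simp only [qk_eq_card_filter_Iio]
  exact congrArg card (filter_congr fun i hi => by rw [h i (by simpa using hi)])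

theorem qk_pathOfHistory_true (k : Fin n) : qk k (pathOfHistory k fun _ => true) = k := by
  rw [qk_eq_card_filter_Iio, filter_true_of_mem fun i hi => by simpa [pathOfHistory] using hi,
    Fin.card_Iio]

theorem qk_pathOfHistory_false (k : Fin n) : qk k (pathOfHistory k fun _ => false) = 0 := by
  simp [qk_eq_card_filter_Iio, pathOfHistory]

theorem prod_pathOfHistory_weight (k : Fin n) (y : Set.Iio k → Bool) (p : ℝ) :
    ∏ i, (if y i then p else 1 - p) =
      p ^ qk k (pathOfHistory k y) * (1 - p) ^ (k.val - qk k (pathOfHistory k y)) := by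
  rw [qk_eq_card_filter_Iio, ← Fin.card_Iio k, ← prod_ite_eq_pow_mul_pow,
    Finset.prod_subtype (Finset.Iio k) (p := (· ∈ Set.Iio k)) (fun i => by simp)]
  exact prod_congr rfl fun i _ => by simp [pathOfHistory, i.2]

theorem ELG_eq_sum_histories (K : Fin n → (Fin n → Bool) → ℝ)
    (hK : ∀ k, DependsOn (K k) (Set.Iio k)) (p : ℝ) :
    ELG K p = 1 / n * ∑ k, ∑ y : Set.Iio k → Bool,
      p ^ qk k (pathOfHistory k y) * (1 - p) ^ (k.val - qk k (pathOfHistory k y)) *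
        (p * log (1 + K k (pathOfHistory k y)) + (1 - p) * log (1 - K k (pathOfHistory k y))) := by
  set w : Bool → ℝ := fun b => if b then p else 1 - p
  have hw : ∑ b, w b = 1 := by simp [w]
  have hweight : ∀ X : Fin n → Bool,
      p ^ numHeads X * (1 - p) ^ (n - numHeads X) = ∏ i, w (X i) := fun X => by
    simp [w, prod_ite_eq_pow_mul_pow, numHeads]
  unfold ELG
  congr 1
  simp only [hweight, mul_sum]
  rw [sum_comm]
  refine sum_congr rfl fun k _ => ?_
  have hstep := sum_prod_mul_eval_eq_sum_prod_mul_sum hw k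
    (F := fun X b => log (1 + K k X * if b then 1 else -1))
    fun X b a => by rw [hK k fun i hi => Function.update_of_ne (ne_of_lt hi) _ _]
  have hmarg := sum_prod_mul_eq_sum_restrict_of_dependsOn hw (Set.Iio k)
    (g := fun X => p * log (1 + K k X) + (1 - p) * log (1 - K k X))
    (fun X Y h => by simp only [hK k h]) fun _ => false
  calc _ = ∑ X, (∏ i, w (X i)) * (p * log (1 + K k X) + (1 - p) * log (1 - K k X)) := by
        rw [hstep]
        refine sum_congr rfl fun X _ => ?_
        simp [w, sub_eq_add_neg]
    _ = _ := by
        rw [hmarg]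
        simp only [← prod_pathOfHistory_weight]
        -- the two sides differ only in the `Fintype` instance on `Set.Iio k`
        convert rfl <;> rfl

end Histories

noncomputable def betaMoment (P : Set ℝ) (a b : ℕ) : ℝ :=
  ∫ p in P, p ^ a * (1 - p) ^ b

noncomputable def historyGain (P : Set ℝ) (k q : ℕ) (x : ℝ) : ℝ :=
  betaMoment P (q + 1) (k - q) * log (1 + x) + betaMoment P q (k - q + 1) * log (1 - x)

section Moments

variable {P : Set ℝ}

theorem setIntegral_pow_mul_pow_mul (hPsub : P ⊆ Set.Icc 0 1) (a b : ℕ) (u v : ℝ) :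
    ∫ p in P, p ^ a * (1 - p) ^ b * (p * u + (1 - p) * v) =
      betaMoment P (a + 1) b * u + betaMoment P a (b + 1) * v := by
  have hsplit : ∀ p : ℝ, p ^ a * (1 - p) ^ b * (p * u + (1 - p) * v) =
      u * (p ^ (a + 1) * (1 - p) ^ b) + v * (p ^ a * (1 - p) ^ (b + 1)) := fun p => by ring
  simp_rw [hsplit]
  rw [integral_add ((Continuous.integrableOn_of_subset_Icc (by fun_prop) hPsub).const_mul _)
    ((Continuous.integrableOn_of_subset_Icc (by fun_prop) hPsub).const_mul _),
    integral_const_mul, integral_const_mul, betaMoment, betaMoment, mul_comm u, mul_comm v]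

theorem betaMoment_pos (hPm : MeasurableSet P) (hPsub : P ⊆ Set.Icc 0 1) (hPpos : 0 < volume P)
    (a b : ℕ) : 0 < betaMoment P a b := by
  refine setIntegral_pos_of_ne_zero_off_countable hPm hPpos
    (Continuous.integrableOn_of_subset_Icc (by fun_prop) hPsub)
    (fun p hp => mul_nonneg (pow_nonneg (hPsub hp).1 _) (pow_nonneg (sub_nonneg.2 (hPsub hp).2) _))
    (Z := {0, 1}) (by simp) fun p hp hpZ => ?_
  have h₀ : 0 < p := (hPsub hp).1.lt_of_ne' fun h => hpZ (by simp [h])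
  have h₁ : p < 1 := (hPsub hp).2.lt_of_ne fun h => hpZ (by simp [h])
  exact (mul_pos (pow_pos h₀ _) (pow_pos (sub_pos.2 h₁) _)).ne'

theorem betaMoment_one_one_sq_lt (hPm : MeasurableSet P) (hPsub : P ⊆ Set.Icc 0 1)
    (hPpos : 0 < volume P) : betaMoment P 1 1 ^ 2 < betaMoment P 2 0 * betaMoment P 0 2 := by
  set a := betaMoment P 0 2
  set b := betaMoment P 1 1
  have ha := betaMoment_pos hPm hPsub hPpos 0 2
  have hb := betaMoment_pos hPm hPsub hPpos 1 1
  have hpos : 0 < ∫ p in P, (a * p - b * (1 - p)) ^ 2 := by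
    refine setIntegral_pos_of_ne_zero_off_countable hPm hPpos
      (Continuous.integrableOn_of_subset_Icc (by fun_prop) hPsub) (fun p _ => sq_nonneg _)
      (Set.countable_singleton (b / (a + b))) fun p _ hp => pow_ne_zero _ fun h => hp ?_
    rw [Set.mem_singleton_iff, eq_div_iff (by positivity)]
    linarith
  have hexpand : ∫ p in P, (a * p - b * (1 - p)) ^ 2 = a * (a * betaMoment P 2 0 - b ^ 2) := by
    have h : ∀ p : ℝ, (a * p - b * (1 - p)) ^ 2 = a ^ 2 * (p ^ 2 * (1 - p) ^ 0) -
        2 * a * b * (p ^ 1 * (1 - p) ^ 1) + b ^ 2 * (p ^ 0 * (1 - p) ^ 2) := fun p => by ring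
    have hi : ∀ {g : ℝ → ℝ}, Continuous g → IntegrableOn g P :=
      fun hg => hg.integrableOn_of_subset_Icc hPsub
    simp_rw [h]
    rw [integral_add (hi (by fun_prop)) (hi (by fun_prop)),
      integral_sub (hi (by fun_prop)) (hi (by fun_prop)), integral_const_mul,
      integral_const_mul, integral_const_mul, ← betaMoment, ← betaMoment, ← betaMoment]
    ring
  nlinarith [hexpand ▸ hpos]

end Moments

section Controllers

variable {n : ℕ} {P : Set ℝ}

theorem robustObj_eq_sum_historyGain (hPsub : P ⊆ Set.Icc 0 1)
    (K : Fin n → (Fin n → Bool) → ℝ) (hK : ∀ k, DependsOn (K k) (Set.Iio k)) :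
    robustObj P K = 1 / n * ∑ k : Fin n, ∑ y : Set.Iio k → Bool,
      historyGain P k (qk k (pathOfHistory k y)) (K k (pathOfHistory k y)) := by
  have hi : ∀ {g : ℝ → ℝ}, Continuous g → IntegrableOn g P :=
    fun hg => hg.integrableOn_of_subset_Icc hPsub
  simp only [robustObj, ELG_eq_sum_histories K hK]
  rw [integral_const_mul,
    integral_finsetSum _ fun k _ => integrable_finsetSum _ fun y _ => hi (by fun_prop)]
  refine congrArg _ (sum_congr rfl fun k _ => ?_)
  rw [integral_finsetSum _ fun y _ => hi (by fun_prop)]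
  exact sum_congr rfl fun y _ => setIntegral_pow_mul_pow_mul hPsub _ _ _ _

theorem Kstar_eq (hPsub : P ⊆ Set.Icc 0 1) (k : Fin n) (X : Fin n → Bool) :
    Kstar P k X =
      (betaMoment P (qk k X + 1) (k - qk k X) - betaMoment P (qk k X) (k - qk k X + 1)) /
        (betaMoment P (qk k X + 1) (k - qk k X) + betaMoment P (qk k X) (k - qk k X + 1)) := by
  have hnum := setIntegral_pow_mul_pow_mul hPsub (qk k X) (k - qk k X) 1 (-1)
  have hden := setIntegral_pow_mul_pow_mul hPsub (qk k X) (k - qk k X) 1 1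
  simp only [mul_one, mul_neg, add_sub_cancel, ← sub_eq_add_neg] at hnum hden
  rw [Kstar, ← hden, ← hnum]
  congr 2 with p
  ring

theorem Kstar_dependsOn (k : Fin n) : DependsOn (Kstar P k) (Set.Iio k) := fun X Y h => by
  simp only [Kstar, qk_dependsOn k h]

variable (hPm : MeasurableSet P) (hPsub : P ⊆ Set.Icc 0 1) (hPpos : 0 < volume P)
include hPm hPsub hPpos

theorem historyGain_lt_historyGain_Kstar (k : Fin n) (X : Fin n → Bool) {x : ℝ}
    (hx : x ∈ Set.Ioo (-1) 1) (hne : x ≠ Kstar P k X) :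
    historyGain P k (qk k X) x < historyGain P k (qk k X) (Kstar P k X) := by
  rw [Kstar_eq hPsub] at hne ⊢
  exact mul_log_add_mul_log_lt (betaMoment_pos hPm hPsub hPpos _ _)
    (betaMoment_pos hPm hPsub hPpos _ _) hx hne

theorem historyGain_le_historyGain_Kstar (k : Fin n) (X : Fin n → Bool) {x : ℝ}
    (hx : x ∈ Set.Ioo (-1) 1) :
    historyGain P k (qk k X) x ≤ historyGain P k (qk k X) (Kstar P k X) := by
  rcases eq_or_ne x (Kstar P k X) with rfl | hne
  · exact le_rfl
  · exact (historyGain_lt_historyGain_Kstar hPm hPsub hPpos k X hx hne).le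

theorem Kstar_heads_ne_Kstar_tails (k : Fin n) (hk : k.val = 1) :
    Kstar P k (pathOfHistory k fun _ => true) ≠ Kstar P k (pathOfHistory k fun _ => false) := by
  have hsq := betaMoment_one_one_sq_lt hPm hPsub hPpos
  have h₂₀ := betaMoment_pos hPm hPsub hPpos 2 0
  have h₁₁ := betaMoment_pos hPm hPsub hPpos 1 1
  have h₀₂ := betaMoment_pos hPm hPsub hPpos 0 2
  rw [Kstar_eq hPsub, Kstar_eq hPsub, qk_pathOfHistory_true, qk_pathOfHistory_false, hk]
  show (betaMoment P 2 0 - betaMoment P 1 1) / (betaMoment P 2 0 + betaMoment P 1 1) ≠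
    (betaMoment P 1 1 - betaMoment P 0 2) / (betaMoment P 1 1 + betaMoment P 0 2)
  rw [ne_eq, div_eq_div_iff (by positivity) (by positivity)]
  nlinarith

end Controllers

/-- Corollary: for `n ≥ 2` flips, the robust optimal nonlinear controller `K*` strictly
outperforms every static linear controller (constant gain `c ∈ (-1,1)`) in robust expected
logarithmic growth; in particular it strictly outperforms the optimal static linear
controller. -/
theorem nonlinear_beats_static_linear (n : ℕ) (hn : 2 ≤ n) (P : Set ℝ)
    (hPmeas : MeasurableSet P) (hPsub : P ⊆ Set.Icc (0 : ℝ) 1) (hPpos : 0 < volume P)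
    (c : ℝ) (hc : c ∈ Set.Ioo (-1 : ℝ) 1) :
    robustObj P (fun (_ : Fin n) (_ : Fin n → Bool) => c) <
      robustObj P (Kstar (n := n) P) := by
  rw [robustObj_eq_sum_historyGain hPsub _ fun _ _ _ _ => rfl,
    robustObj_eq_sum_historyGain hPsub _ Kstar_dependsOn]
  refine mul_lt_mul_of_pos_left ?_ (one_div_pos.2 (Nat.cast_pos.2 (by omega)))
  have hle : ∀ (k : Fin n) (y : Set.Iio k → Bool), historyGain P k (qk k (pathOfHistory k y)) c ≤
      historyGain P k (qk k (pathOfHistory k y)) (Kstar P k (pathOfHistory k y)) :=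
    fun k y => historyGain_le_historyGain_Kstar hPmeas hPsub hPpos k _ hc
  let k₁ : Fin n := ⟨1, by omega⟩
  obtain ⟨y, hy⟩ : ∃ y : Set.Iio k₁ → Bool, c ≠ Kstar P k₁ (pathOfHistory k₁ y) := by
    by_contra! h
    exact Kstar_heads_ne_Kstar_tails hPmeas hPsub hPpos k₁ rfl ((h _).symm.trans (h _))
  refine sum_lt_sum (fun k _ => sum_le_sum fun y _ => hle k y) ⟨k₁, mem_univ _, ?_⟩
  exact sum_lt_sum (fun y _ => hle k₁ y)
    ⟨y, mem_univ _, historyGain_lt_historyGain_Kstar hPmeas hPsub hPpos k₁ _ hc hy⟩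
end
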